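/- arXiv:2401.11890 — 4 statements merged into one kernel-verified Lean document; each statement's English description precedes it below -/
import Mathlib

section
/- Let J : ℝ → Matrix (Fin 3) (Fin 3) ℝ be differentiable at t₀ with det(J(t₀)) ≠ 0, and define C(t) = (det J(t))⁻¹ • (J(t))ᵀ * J(t). Then C is differentiable at t₀ and its derivative satisfies C'(t₀) = − trace(J'(t₀) * (J(t₀))⁻¹) • C(t₀) + (det J(t₀))⁻¹ • ((J'(t₀))ᵀ * J(t₀)) + (det J(t₀))⁻¹ • ((J'(t₀))ᵀ * J(t₀))ᵀ, where J'(t₀) denotes the derivative of J at t₀. -/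
/-!
Jacobi's formula does the work: the determinant is multilinear in the rows, so its derivative
along `J'` is `∑ i, det (J with row i replaced by J' i)`, and by Cramer's rule this sum is
`trace (J' * adj J)`. With `J⁻¹ = (det J)⁻¹ • adj J`, the formula for `C'` is then the product rule
applied to `(det J)⁻¹ • (Jᵀ * J)`.
-/

open Matrix

attribute [local instance] Matrix.normedAddCommGroup Matrix.normedSpace

namespace Matrix

variable {n : Type*} [Fintype n] [DecidableEq n] {R : Type*} [CommRing R]

theorem det_updateRow_eq_vecMul_adjugate (A : Matrix n n R) (i : n) (v : n → R) :
    (A.updateRow i v).det = (v ᵥ* A.adjugate) i := by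
  rw [← cramer_transpose_apply, cramer_eq_adjugate_mulVec, ← adjugate_transpose, mulVec_transpose]

theorem sum_det_updateRow_eq_trace_mul_adjugate (A B : Matrix n n R) :
    ∑ i, (A.updateRow i (B i)).det = trace (B * A.adjugate) := by
  simp only [det_updateRow_eq_vecMul_adjugate, trace, diag_apply, mul_apply, vecMul, dotProduct]

end Matrix

section Calculus

variable {𝕜 : Type*} [NontriviallyNormedField 𝕜] {l m n p : Type*} {t : 𝕜}

variable (𝕜 n) in
def Matrix.detRowContinuousMultilinear [Fintype n] [DecidableEq n] :
    ContinuousMultilinearMap 𝕜 (fun _ : n => n → 𝕜) 𝕜 where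
  toMultilinearMap := (detRowAlternating : (n → 𝕜) [⋀^n]→ₗ[𝕜] 𝕜).toMultilinearMap
  cont := continuous_id.matrix_det

theorem HasDerivAt.matrix_det [Fintype n] [DecidableEq n] {J : 𝕜 → Matrix n n 𝕜}
    {J' : Matrix n n 𝕜} (hJ : HasDerivAt J J' t) :
    HasDerivAt (fun t => (J t).det) (trace (J' * (J t).adjugate)) t :=
  (((detRowContinuousMultilinear 𝕜 n).hasFDerivAt (J t)).comp_hasDerivAt t hJ).congr_deriv <|
    (ContinuousMultilinearMap.linearDeriv_apply _ _ _).trans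
      (sum_det_updateRow_eq_trace_mul_adjugate _ _)

theorem hasDerivAt_matrix [Fintype l] [Fintype m] {A : 𝕜 → Matrix l m 𝕜} {A' : Matrix l m 𝕜} :
    HasDerivAt A A' t ↔ ∀ i j, HasDerivAt (fun t => A t i j) (A' i j) t :=
  hasDerivAt_pi.trans (forall_congr' fun _ => hasDerivAt_pi)

theorem HasDerivAt.matrix_transpose [Fintype l] [Fintype m] {A : 𝕜 → Matrix l m 𝕜}
    {A' : Matrix l m 𝕜} (hA : HasDerivAt A A' t) : HasDerivAt (fun t => (A t)ᵀ) A'ᵀ t :=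
  hasDerivAt_matrix.2 fun i j => hasDerivAt_matrix.1 hA j i

theorem HasDerivAt.matrix_mul [Fintype l] [Fintype m] [Fintype p] {A : 𝕜 → Matrix l m 𝕜}
    {A' : Matrix l m 𝕜} {B : 𝕜 → Matrix m p 𝕜} {B' : Matrix m p 𝕜}
    (hA : HasDerivAt A A' t) (hB : HasDerivAt B B' t) :
    HasDerivAt (fun t => A t * B t) (A' * B t + A t * B') t :=
  hasDerivAt_matrix.2 fun i j => by
    have hsum := HasDerivAt.fun_sum fun k (_ : k ∈ Finset.univ) =>
      (hasDerivAt_matrix.1 hA i k).mul (hasDerivAt_matrix.1 hB k j)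
    simp only [Finset.sum_add_distrib] at hsum
    exact hsum

theorem HasDerivAt.det_inv_smul_transpose_mul [Fintype n] [DecidableEq n]
    {J : 𝕜 → Matrix n n 𝕜} {J' : Matrix n n 𝕜} (hJ : HasDerivAt J J' t) (hdet : (J t).det ≠ 0) :
    HasDerivAt (fun t => (J t).det⁻¹ • ((J t)ᵀ * J t))
      (-(trace (J' * (J t)⁻¹)) • ((J t).det⁻¹ • ((J t)ᵀ * J t))
        + (J t).det⁻¹ • (J'ᵀ * J t) + (J t).det⁻¹ • (J'ᵀ * J t)ᵀ) t := by
  refine ((hJ.matrix_det.inv hdet).smul (hJ.matrix_transpose.matrix_mul hJ)).congr_deriv ?_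
  rw [Pi.inv_apply, inv_def, Ring.inverse_eq_inv', Matrix.mul_smul, trace_smul, transpose_mul,
    transpose_transpose]
  module

end Calculus

/-- Derivative of the stiffness deformation coefficient
`C(t) = (det J(t))⁻¹ • J(t)ᵀ * J(t)`. -/
theorem deriv_stiffness_coefficient
    (J : ℝ → Matrix (Fin 3) (Fin 3) ℝ) (J' : Matrix (Fin 3) (Fin 3) ℝ) (t₀ : ℝ)
    (hJ : HasDerivAt J J' t₀) (hdet : (J t₀).det ≠ 0)
    (C : ℝ → Matrix (Fin 3) (Fin 3) ℝ)
    (hC : ∀ t, C t = ((J t).det)⁻¹ • ((J t)ᵀ * J t)) :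
    HasDerivAt C
      (-(Matrix.trace (J' * (J t₀)⁻¹)) • C t₀
        + ((J t₀).det)⁻¹ • (J'ᵀ * J t₀)
        + ((J t₀).det)⁻¹ • (J'ᵀ * J t₀)ᵀ) t₀ := by
  rw [funext hC]
  exact hJ.det_inv_smul_transpose_mul hdet
end

section
/- Let N, m ∈ ℕ with m ≤ N, let K, M ∈ Matrix (Fin N) (Fin N) ℝ be symmetric with M positive definite, let λ₀ ∈ ℝ, and let E₀ ∈ Matrix (Fin N) (Fin m) ℝ be such that (E₀)ᵀ * M * E₀ = 1 and the kernel of the linear map v ↦ (K − λ₀ • M) *ᵥ v equals the column span of E₀ (i.e., (K − λ₀ M) v = 0 if and only if v = E₀ *ᵥ c for some c ∈ Fin m → ℝ). Then the bordered (N+m)×(N+m) block matrix fromBlocks (K − λ₀ • M) (−(M * E₀)) (−((E₀)ᵀ * M)) 0 is invertible. -/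
open Matrix

/-- Unique solvability of the discrete saddle-point system: if `λ₀` is an eigenvalue of
multiplicity `m` of the symmetric generalized eigenvalue problem `K e = λ M e` (`M`
symmetric positive definite) with `M`-orthonormal eigenbasis collected in `E₀`, then the
bordered block matrix `[[K - λ₀ M, -M E₀], [-E₀ᵀ M, 0]]` is invertible. -/
theorem saddle_point_matrix_isUnit
    (N m : ℕ) (hm : m ≤ N)
    (K M : Matrix (Fin N) (Fin N) ℝ)
    (hK : K.IsSymm) (hM : M.PosDef)
    (lam0 : ℝ) (E₀ : Matrix (Fin N) (Fin m) ℝ)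
    (hortho : E₀ᵀ * M * E₀ = 1)
    (hker : ∀ v : Fin N → ℝ,
      (K - lam0 • M) *ᵥ v = 0 ↔ ∃ c : Fin m → ℝ, v = E₀ *ᵥ c) :
    IsUnit (Matrix.fromBlocks (K - lam0 • M) (-(M * E₀)) (-(E₀ᵀ * M)) 0) := by
  set A := K - lam0 • M with hA
  have hMs : Mᵀ = M := by
    have := hM.1
    rwa [Matrix.IsHermitian, conjTranspose_eq_transpose_of_trivial] at this
  have hAsymm : Aᵀ = A := by
    rw [hA, transpose_sub, transpose_smul, hK.eq, hMs]
  have hAE : A * E₀ = 0 := by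
    ext i j
    have h0 : A *ᵥ (fun i => E₀ i j) = 0 := by
      rw [hker]
      exact ⟨Pi.single j 1, by ext i; simp [mulVec, dotProduct, Pi.single_apply]⟩
    have := congrFun h0 i
    simpa [mulVec, dotProduct, Matrix.mul_apply] using this
  rw [Matrix.isUnit_iff_isUnit_det, isUnit_iff_ne_zero]
  intro hdet
  rw [← Matrix.exists_mulVec_eq_zero_iff] at hdet
  obtain ⟨v, hv, hv0⟩ := hdet
  apply hv
  have hv' : Matrix.fromBlocks A (-(M * E₀)) (-(E₀ᵀ * M)) 0 *ᵥ
      Sum.elim (v ∘ Sum.inl) (v ∘ Sum.inr) = 0 := by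
    convert hv0 using 2
    ext (i | i) <;> rfl
  rw [fromBlocks_mulVec] at hv'
  set x := v ∘ Sum.inl with hx
  set y := v ∘ Sum.inr with hy
  simp only [Sum.elim_comp_inl, Sum.elim_comp_inr] at hv'
  have h1 : A *ᵥ x = (M * E₀) *ᵥ y := by
    funext i
    have h := congrFun hv' (Sum.inl i)
    simp only [Sum.elim_inl, Pi.add_apply, neg_mulVec, Pi.neg_apply, Pi.zero_apply] at h
    linarith
  have h2 : (E₀ᵀ * M) *ᵥ x = 0 := by
    funext i
    have h := congrFun hv' (Sum.inr i)
    simp only [Sum.elim_inr, Pi.add_apply, neg_mulVec, Pi.neg_apply, Pi.zero_apply,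
      zero_mulVec] at h
    simp only [Pi.zero_apply]
    linarith
  have hy0 : y = 0 := by
    have : (E₀ᵀ * M * E₀) *ᵥ y = (E₀ᵀ * A) *ᵥ x := by
      rw [Matrix.mul_assoc, ← mulVec_mulVec, ← h1, mulVec_mulVec]
    have hEA : E₀ᵀ * A = 0 := by
      rw [← hAsymm, ← transpose_mul, hAE, transpose_zero]
    rw [hortho, one_mulVec, hEA, zero_mulVec] at this
    exact this
  have hx0 : x = 0 := by
    have hAx : A *ᵥ x = 0 := by rw [h1, hy0, mulVec_zero]
    obtain ⟨c, hc⟩ := (hker x).mp hAx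
    have hc0 : c = 0 := by
      have : (E₀ᵀ * M * E₀) *ᵥ c = 0 := by
        rw [← mulVec_mulVec, ← hc, h2]
      rwa [hortho, one_mulVec] at this
    rw [hc, hc0, mulVec_zero]
  funext i
  cases i with
  | inl i => exact congrFun hx0 i
  | inr i => exact congrFun hy0 i
end

section
/- Let M ∈ ℕ, δ > 0, C₁, C₂ ≥ 0, λ₀ ∈ ℝ, and let f : ℝ → (Fin M → ℝ) → ℝ be such that for every z ∈ [-1,1]^M, the map t ↦ f t z is twice differentiable on (-δ, δ) with |∂ₜ f t z| ≤ C₁ and |∂ₜ² f t z| ≤ C₂ there, f 0 z = λ₀, and ∂ₜ f 0 z = L z for a fixed linear functional L : (Fin M → ℝ) →ₗ[ℝ] ℝ. Let Z be a random vector valued almost surely in [-1,1]^M with 𝔼[Z] = 0, with ω ↦ f t (Z ω) measurable for each t. Then there exists a constant C' ≥ 0, depending only on C₁, C₂ and the operator norm of L, such that for all |t| < δ: |Var[f t Z] − t² * Var[L Z]| ≤ C' * |t|³, where Var[Y] = 𝔼[Y²] − (𝔼[Y])². -/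
/-!
Variance is invariant under adding constants and `Var[U] - Var[V] = cov[U - V, U + V]`.
With `U = f t Z - λ₀` and `V = t • L Z`, the mean value theorem bounds both by `C₁|t|`, and
applied twice it bounds `U - V` by `C₂ t²`; a covariance of variables bounded by `a` and `b`
is at most `2ab`, whence the `|t|³` bound.
-/

open MeasureTheory ProbabilityTheory Set

theorem Convex.abs_image_sub_sub_mul_le_of_hasDerivAt {s : Set ℝ} (hs : Convex ℝ s)
    {g g' g'' : ℝ → ℝ} {C a b : ℝ}
    (hg : ∀ x ∈ s, HasDerivAt g (g' x) x) (hg' : ∀ x ∈ s, HasDerivAt g' (g'' x) x)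
    (hC : ∀ x ∈ s, |g'' x| ≤ C) (ha : a ∈ s) (hb : b ∈ s) :
    |g b - g a - (b - a) * g' a| ≤ C * (b - a) ^ 2 := by
  have hab : uIcc a b ⊆ s := hs.ordConnected.uIcc_subset ha hb
  have hg'_near : ∀ x ∈ uIcc a b, |g' x - g' a| ≤ C * |b - a| := fun x hx =>
    (hs.norm_image_sub_le_of_norm_hasDerivWithin_le (fun y hy => (hg' y hy).hasDerivWithinAt)
      hC ha (hab hx)).trans
      (mul_le_mul_of_nonneg_left (abs_sub_left_of_mem_uIcc hx) ((abs_nonneg _).trans (hC a ha)))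
  have hlin : ∀ x ∈ uIcc a b,
      HasDerivAt (fun y => g y - y * g' a) (g' x - g' a) x := fun x hx => by
    simpa only [one_mul] using (hg x (hab hx)).fun_sub ((hasDerivAt_id' x).mul_const (g' a))
  have := (convex_uIcc a b).norm_image_sub_le_of_norm_hasDerivWithin_le
    (fun x hx => (hlin x hx).hasDerivWithinAt) hg'_near left_mem_uIcc right_mem_uIcc
  calc |g b - g a - (b - a) * g' a| = |g b - b * g' a - (g a - a * g' a)| := by ring_nf
    _ ≤ C * |b - a| * |b - a| := this
    _ = C * (b - a) ^ 2 := by rw [mul_assoc, abs_mul_abs_self, sq]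

section Variance

variable {Ω : Type*} [MeasurableSpace Ω] {μ : Measure Ω} [IsProbabilityMeasure μ]

theorem abs_covariance_le_of_abs_le {X Y : Ω → ℝ} {a b : ℝ}
    (hX : AEStronglyMeasurable X μ) (hY : AEStronglyMeasurable Y μ)
    (hXa : ∀ᵐ ω ∂μ, |X ω| ≤ a) (hYb : ∀ᵐ ω ∂μ, |Y ω| ≤ b) :
    |cov[X, Y; μ]| ≤ 2 * a * b := by
  have h_int : ∀ (W : Ω → ℝ) (c : ℝ), (∀ᵐ ω ∂μ, |W ω| ≤ c) → |μ[W]| ≤ c := fun W c h => by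
    simpa using norm_integral_le_of_norm_le_const (μ := μ) (f := W) h
  have hXY : ∀ᵐ ω ∂μ, |(X * Y) ω| ≤ a * b := by
    filter_upwards [hXa, hYb] with ω hXω hYω
    rw [Pi.mul_apply, abs_mul]
    exact mul_le_mul hXω hYω (abs_nonneg _) ((abs_nonneg _).trans hXω)
  rw [covariance_eq_sub (MemLp.of_bound hX a hXa) (MemLp.of_bound hY b hYb)]
  calc |μ[X * Y] - μ[X] * μ[Y]| ≤ |μ[X * Y]| + |μ[X]| * |μ[Y]| := by
        rw [← abs_mul]; exact abs_sub _ _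
    _ ≤ a * b + a * b := by
        gcongr
        · exact h_int _ _ hXY
        · exact (abs_nonneg _).trans (h_int _ _ hXa)
        · exact h_int _ _ hXa
        · exact h_int _ _ hYb
    _ = 2 * a * b := by ring

theorem variance_sub_variance_eq_covariance {U V : Ω → ℝ} (hU : MemLp U 2 μ) (hV : MemLp V 2 μ) :
    Var[U; μ] - Var[V; μ] = cov[U - V, U + V; μ] := by
  rw [covariance_sub_left hU hV (hU.add hV), covariance_add_right hU hU hV,
    covariance_add_right hV hU hV, covariance_self hU.aemeasurable,
    covariance_self hV.aemeasurable, covariance_comm V U]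
  ring

theorem abs_variance_sub_variance_le {U V : Ω → ℝ} {a b : ℝ}
    (hU : AEStronglyMeasurable U μ) (hV : AEStronglyMeasurable V μ)
    (hUa : ∀ᵐ ω ∂μ, |U ω| ≤ a) (hVa : ∀ᵐ ω ∂μ, |V ω| ≤ a)
    (hUV : ∀ᵐ ω ∂μ, |U ω - V ω| ≤ b) :
    |Var[U; μ] - Var[V; μ]| ≤ 4 * a * b := by
  have hsum : ∀ᵐ ω ∂μ, |(U + V) ω| ≤ 2 * a := by
    filter_upwards [hUa, hVa] with ω hUω hVω
    exact (abs_add_le _ _).trans (by linarith)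
  rw [variance_sub_variance_eq_covariance (MemLp.of_bound hU a hUa) (MemLp.of_bound hV a hVa)]
  calc |cov[U - V, U + V; μ]| ≤ 2 * b * (2 * a) :=
        abs_covariance_le_of_abs_le (hU.sub hV) (hU.add hV) hUV hsum
    _ = 4 * a * b := by ring

theorem variance_eq_integral_sq_sub_sq {X : Ω → ℝ} (hX : MemLp X 2 μ) :
    Var[X; μ] = (∫ ω, X ω ^ 2 ∂μ) - (∫ ω, X ω ∂μ) ^ 2 := by
  rw [variance_eq_sub hX]
  rfl

end Variance

theorem variance_perturbation_third_order_general
    {Ω : Type*} [MeasurableSpace Ω] (P : Measure Ω) [IsProbabilityMeasure P]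
    (M : ℕ) (δ C₁ C₂ : ℝ) (hδ : 0 < δ) (hC₁ : 0 ≤ C₁) (hC₂ : 0 ≤ C₂)
    (lam0 : ℝ)
    (f f' f'' : ℝ → (Fin M → ℝ) → ℝ)
    (L : (Fin M → ℝ) →ₗ[ℝ] ℝ)
    (hf : ∀ z : Fin M → ℝ, (∀ i, z i ∈ Set.Icc (-1 : ℝ) 1) →
      ∀ t ∈ Set.Ioo (-δ) δ,
        HasDerivAt (fun s => f s z) (f' t z) t ∧
        HasDerivAt (fun s => f' s z) (f'' t z) t ∧
        |f' t z| ≤ C₁ ∧ |f'' t z| ≤ C₂)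
    (hf0 : ∀ z : Fin M → ℝ, (∀ i, z i ∈ Set.Icc (-1 : ℝ) 1) → f 0 z = lam0)
    (hf'0 : ∀ z : Fin M → ℝ, (∀ i, z i ∈ Set.Icc (-1 : ℝ) 1) → f' 0 z = L z)
    (Z : Ω → Fin M → ℝ) (hZmeas : Measurable Z)
    (hZbox : ∀ᵐ ω ∂P, ∀ i, Z ω i ∈ Set.Icc (-1 : ℝ) 1)
    (hmeas : ∀ t : ℝ, Measurable fun ω => f t (Z ω)) :
    ∃ C' : ℝ, 0 ≤ C' ∧ ∀ t : ℝ, |t| < δ →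
      |((∫ ω, (f t (Z ω)) ^ 2 ∂P) - (∫ ω, f t (Z ω) ∂P) ^ 2)
          - t ^ 2 * ((∫ ω, (L (Z ω)) ^ 2 ∂P) - (∫ ω, L (Z ω) ∂P) ^ 2)|
        ≤ C' * |t| ^ 3 := by
  have h0 : (0 : ℝ) ∈ Ioo (-δ) δ := ⟨neg_lt_zero.2 hδ, hδ⟩
  have hLZ_meas : Measurable fun ω => L (Z ω) :=
    L.continuous_of_finiteDimensional.measurable.comp hZmeas
  refine ⟨4 * C₁ * C₂, by positivity, fun t ht => ?_⟩
  have ht' : t ∈ Ioo (-δ) δ := abs_lt.1 ht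
  have hbounds : ∀ᵐ ω ∂P, |f t (Z ω) - lam0| ≤ C₁ * |t| ∧ |L (Z ω)| ≤ C₁ ∧
      |f t (Z ω) - lam0 - t * L (Z ω)| ≤ C₂ * |t| ^ 2 := by
    filter_upwards [hZbox] with ω hω
    have hg := fun s hs => hf (Z ω) hω s hs
    refine ⟨?_, ?_, ?_⟩
    · simpa [hf0 _ hω] using (convex_Ioo (-δ) δ).norm_image_sub_le_of_norm_hasDerivWithin_le
        (fun s hs => (hg s hs).1.hasDerivWithinAt) (fun s hs => (hg s hs).2.2.1) h0 ht'
    · exact hf'0 _ hω ▸ (hg 0 h0).2.2.1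
    · simpa [hf0 _ hω, hf'0 _ hω] using (convex_Ioo (-δ) δ).abs_image_sub_sub_mul_le_of_hasDerivAt
        (fun s hs => (hg s hs).1) (fun s hs => (hg s hs).2.1) (fun s hs => (hg s hs).2.2.2) h0 ht'
  have hX : MemLp (fun ω => f t (Z ω)) 2 P :=
    MemLp.of_bound (hmeas t).aestronglyMeasurable (|lam0| + C₁ * |t|) <| by
      filter_upwards [hbounds] with ω hω
      have := abs_sub_abs_le_abs_sub (f t (Z ω)) lam0
      rw [Real.norm_eq_abs]; linarith [hω.1]
  have hLZ : MemLp (fun ω => L (Z ω)) 2 P :=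
    MemLp.of_bound hLZ_meas.aestronglyMeasurable C₁ <| by
      filter_upwards [hbounds] with ω hω using hω.2.1
  rw [← variance_eq_integral_sq_sub_sq hX, ← variance_eq_integral_sq_sub_sq hLZ,
    ← variance_sub_const (hmeas t).aestronglyMeasurable lam0, ← variance_const_mul]
  calc _ ≤ 4 * (C₁ * |t|) * (C₂ * |t| ^ 2) :=
        abs_variance_sub_variance_le ((hmeas t).sub_const lam0).aestronglyMeasurable
          (hLZ_meas.const_mul t).aestronglyMeasurable (hbounds.mono fun ω hω => hω.1)
          (hbounds.mono fun ω hω => by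
            rw [abs_mul, mul_comm]; exact mul_le_mul_of_nonneg_right hω.2.1 (abs_nonneg t))
          (hbounds.mono fun ω hω => hω.2.2)
    _ = 4 * C₁ * C₂ * |t| ^ 3 := by ring

/-- Second-order perturbation approximation of the variance of an eigenvalue trajectory:
if `t ↦ f t z` is twice differentiable on `(-δ, δ)` with `|∂ₜ f| ≤ C₁`, `|∂ₜ² f| ≤ C₂`,
`f 0 z = λ₀` deterministic, and `∂ₜ f 0 z = L z` linear in the centered, box-valued random
parameter `z`, then `Var[f t Z] = t² Var[L Z] + O(|t|³)`. -/
theorem variance_perturbation_third_order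
    {Ω : Type*} [MeasurableSpace Ω] (P : Measure Ω) [IsProbabilityMeasure P]
    (M : ℕ) (δ C₁ C₂ : ℝ) (hδ : 0 < δ) (hC₁ : 0 ≤ C₁) (hC₂ : 0 ≤ C₂)
    (lam0 : ℝ)
    (f f' f'' : ℝ → (Fin M → ℝ) → ℝ)
    (L : (Fin M → ℝ) →ₗ[ℝ] ℝ)
    (hf : ∀ z : Fin M → ℝ, (∀ i, z i ∈ Set.Icc (-1 : ℝ) 1) →
      ∀ t ∈ Set.Ioo (-δ) δ,
        HasDerivAt (fun s => f s z) (f' t z) t ∧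
        HasDerivAt (fun s => f' s z) (f'' t z) t ∧
        |f' t z| ≤ C₁ ∧ |f'' t z| ≤ C₂)
    (hf0 : ∀ z : Fin M → ℝ, (∀ i, z i ∈ Set.Icc (-1 : ℝ) 1) → f 0 z = lam0)
    (hf'0 : ∀ z : Fin M → ℝ, (∀ i, z i ∈ Set.Icc (-1 : ℝ) 1) → f' 0 z = L z)
    (Z : Ω → Fin M → ℝ) (hZmeas : Measurable Z)
    (hZbox : ∀ᵐ ω ∂P, ∀ i, Z ω i ∈ Set.Icc (-1 : ℝ) 1)
    (hZmean : ∫ ω, Z ω ∂P = 0)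
    (hmeas : ∀ t : ℝ, Measurable fun ω => f t (Z ω)) :
    ∃ C' : ℝ, 0 ≤ C' ∧ ∀ t : ℝ, |t| < δ →
      |((∫ ω, (f t (Z ω)) ^ 2 ∂P) - (∫ ω, f t (Z ω) ∂P) ^ 2)
          - t ^ 2 * ((∫ ω, (L (Z ω)) ^ 2 ∂P) - (∫ ω, L (Z ω) ∂P) ^ 2)|
        ≤ C' * |t| ^ 3 :=
  variance_perturbation_third_order_general P M δ C₁ C₂ hδ hC₁ hC₂ lam0 f f' f'' L hf hf0 hf'0 Z
    hZmeas hZbox hmeas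
end

section
/- Let M ∈ ℕ, δ > 0, C₁, C₂, C₃ ≥ 0, λ₀ ∈ ℝ, and let f : ℝ → (Fin M → ℝ) → ℝ be such that for every z ∈ [-1,1]^M, t ↦ f t z is three times differentiable on (-δ, δ) with |∂ₜ f t z| ≤ C₁, |∂ₜ² f t z| ≤ C₂, |∂ₜ³ f t z| ≤ C₃ there, f 0 z = λ₀, ∂ₜ f 0 z = L z for a fixed linear functional L, and ∂ₜ² f 0 z = q z z for a fixed bilinear form q : (Fin M → ℝ) → (Fin M → ℝ) → ℝ. Let Z be a random vector valued almost surely in [-1,1]^M with 𝔼[Z] = 0 and vanishing third moments, i.e., 𝔼[Z_i Z_j Z_k] = 0 for all i, j, k, and ω ↦ f t (Z ω) measurable for each t. Then there exists a constant C'' ≥ 0 such that for all |t| < δ: |Var[f t Z] − t² * Var[L Z]| ≤ C'' * t⁴. -/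
/-!
Write `A = L Z`, `Q = q Z Z` and `f t Z = λ₀ + t A + (t²/2) Q + R` with `|R| ≤ C₃ |t|³`
(Taylor). Since `𝔼 A = 0`,
`Var[f t Z] = t² Var[A] + 2t 𝔼[A · ((t²/2) Q + R)] + Var[(t²/2) Q + R]`.
The last term is `O(t⁴)` because its argument is `O(t²)`. In the middle term the
order-`t³` contribution `t³ 𝔼[A Q]` is a combination of third moments of `Z`, hence
vanishes, and `2t 𝔼[A R] = O(t⁴)`.
-/

open MeasureTheory ProbabilityTheory

lemma abs_le_mul_abs_pow_succ_of_hasDerivAt {g g' : ℝ → ℝ} {δ C : ℝ} {n : ℕ} (hC : 0 ≤ C)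
    (hg : ∀ s, |s| < δ → HasDerivAt g (g' s) s) (hg' : ∀ s, |s| < δ → |g' s| ≤ C * |s| ^ n)
    (h0 : g 0 = 0) {t : ℝ} (ht : |t| < δ) : |g t| ≤ C * |t| ^ (n + 1) := by
  have habs : ∀ s ∈ Set.uIcc 0 t, |s| ≤ |t| := fun s hs => by
    simpa using Set.abs_sub_left_of_mem_uIcc hs
  have hmvt := Convex.norm_image_sub_le_of_norm_hasDerivWithin_le (C := C * |t| ^ n)
    (fun s hs => (hg s ((habs s hs).trans_lt ht)).hasDerivWithinAt)
    (fun s hs => (hg' s ((habs s hs).trans_lt ht)).trans <|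
      mul_le_mul_of_nonneg_left (pow_le_pow_left₀ (abs_nonneg s) (habs s hs) n) hC)
    (convex_uIcc 0 t) Set.left_mem_uIcc Set.right_mem_uIcc
  simpa [h0, pow_succ, mul_assoc] using hmvt

lemma abs_sub_taylor_two_le {g g' g'' g''' : ℝ → ℝ} {δ C : ℝ} (hC : 0 ≤ C)
    (hg : ∀ s, |s| < δ → HasDerivAt g (g' s) s)
    (hg' : ∀ s, |s| < δ → HasDerivAt g' (g'' s) s)
    (hg'' : ∀ s, |s| < δ → HasDerivAt g'' (g''' s) s)
    (hg''' : ∀ s, |s| < δ → |g''' s| ≤ C) {t : ℝ} (ht : |t| < δ) :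
    |g t - g 0 - t * g' 0 - t ^ 2 / 2 * g'' 0| ≤ C * |t| ^ 3 := by
  have h2 : ∀ s, |s| < δ → |g'' s - g'' 0| ≤ C * |s| ^ 1 := fun s hs =>
    abs_le_mul_abs_pow_succ_of_hasDerivAt (n := 0) hC (fun r hr => (hg'' r hr).sub_const _)
      (by simpa using hg''') (sub_self _) hs
  have h1 : ∀ s, |s| < δ → |g' s - g' 0 - s * g'' 0| ≤ C * |s| ^ 2 := fun s hs =>
    abs_le_mul_abs_pow_succ_of_hasDerivAt (g := fun s => g' s - g' 0 - s * g'' 0) hC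
      (fun r hr => ((hg' r hr).sub_const _).sub (hasDerivAt_mul_const _)) h2 (by simp) hs
  refine abs_le_mul_abs_pow_succ_of_hasDerivAt
    (g := fun s => g s - g 0 - s * g' 0 - s ^ 2 / 2 * g'' 0) hC (fun r hr => ?_) h1 (by simp) ht
  have hsq : HasDerivAt (fun s : ℝ => s ^ 2 / 2 * g'' 0) (r * g'' 0) r := by
    refine (((hasDerivAt_pow 2 r).div_const 2).mul_const (g'' 0)).congr_deriv ?_
    push_cast
    ring
  exact (((hg r hr).sub_const _).sub (hasDerivAt_mul_const _)).sub hsq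

lemma linearMap_mul_bilin_self_eq_sum {ι : Type*} [Fintype ι] [DecidableEq ι]
    (L : (ι → ℝ) →ₗ[ℝ] ℝ) (q : (ι → ℝ) →ₗ[ℝ] (ι → ℝ) →ₗ[ℝ] ℝ) (z : ι → ℝ) :
    L z * q z z = ∑ p : ι × ι × ι,
      q (Pi.single p.1 1) (Pi.single p.2.1 1) * L (Pi.single p.2.2 1) *
        (z p.1 * z p.2.1 * z p.2.2) := by
  conv_lhs => rw [pi_eq_sum_univ' z]
  simp only [map_sum, map_smul, LinearMap.sum_apply, LinearMap.smul_apply, smul_eq_mul,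
    Finset.sum_mul, Finset.mul_sum, Fintype.sum_prod_type]
  rw [Finset.sum_comm]
  congr! 3
  ring

section Moments

variable {Ω : Type*} [MeasurableSpace Ω] {P : Measure Ω}

lemma integrable_apply_mul_apply_mul_apply [IsFiniteMeasure P] {ι : Type*} [Fintype ι]
    {Z : Ω → ι → ℝ} {C : ℝ} (hZ : AEStronglyMeasurable Z P) (hbd : ∀ᵐ ω ∂P, ‖Z ω‖ ≤ C)
    (i j k : ι) : Integrable (fun ω => Z ω i * Z ω j * Z ω k) P :=
  Integrable.of_bound (by fun_prop) (C * C * C) <| hbd.mono fun ω hω => by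
    have hcoord := fun i => (norm_le_pi_norm (Z ω) i).trans hω
    have hC : 0 ≤ C := (norm_nonneg _).trans hω
    rw [norm_mul, norm_mul]
    gcongr <;> apply hcoord

lemma integral_linearMap_mul_bilin_self_eq_zero {ι : Type*} [Fintype ι] {Z : Ω → ι → ℝ}
    (L : (ι → ℝ) →ₗ[ℝ] ℝ) (q : (ι → ℝ) →ₗ[ℝ] (ι → ℝ) →ₗ[ℝ] ℝ)
    (hint : ∀ i j k, Integrable (fun ω => Z ω i * Z ω j * Z ω k) P)
    (hZ3 : ∀ i j k, ∫ ω, Z ω i * Z ω j * Z ω k ∂P = 0) :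
    ∫ ω, L (Z ω) * q (Z ω) (Z ω) ∂P = 0 := by
  classical
  simp_rw [linearMap_mul_bilin_self_eq_sum L q]
  rw [integral_finsetSum _ fun p _ => (hint _ _ _).const_mul _]
  exact Finset.sum_eq_zero fun p _ => by rw [integral_const_mul, hZ3, mul_zero]

variable [IsProbabilityMeasure P]

lemma abs_integral_le_of_ae_abs_le {f : Ω → ℝ} {C : ℝ} (h : ∀ᵐ ω ∂P, |f ω| ≤ C) :
    |∫ ω, f ω ∂P| ≤ C := by
  simpa using norm_integral_le_of_norm_le_const (μ := P) (f := f) (by simpa using h)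

lemma variance_const_add_mul_add {A H : Ω → ℝ} (c t : ℝ) (hA : MemLp A 2 P)
    (hH : MemLp H 2 P) (hA0 : ∫ ω, A ω ∂P = 0) :
    Var[fun ω => c + (t * A ω + H ω); P]
      = t ^ 2 * Var[A; P] + 2 * t * ∫ ω, A ω * H ω ∂P + Var[H; P] := by
  have htAH : AEStronglyMeasurable (fun ω => t * A ω + H ω) P :=
    ((hA.const_mul t).add hH).aestronglyMeasurable
  rw [variance_const_add htAH,
    variance_fun_add (hA.const_mul t) hH, variance_const_mul, covariance_const_mul_left,
    covariance_eq_sub hA hH, hA0, zero_mul, sub_zero]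
  simp only [Pi.mul_apply]
  ring

lemma abs_variance_sub_sq_mul_variance_le {X A Q : Ω → ℝ} {c t C₁ C₂ ε : ℝ}
    (hX : AEStronglyMeasurable X P) (hA : AEStronglyMeasurable A P)
    (hQ : AEStronglyMeasurable Q P)
    (hA_bd : ∀ᵐ ω ∂P, |A ω| ≤ C₁) (hQ_bd : ∀ᵐ ω ∂P, |Q ω| ≤ C₂)
    (hR_bd : ∀ᵐ ω ∂P, |X ω - c - t * A ω - t ^ 2 / 2 * Q ω| ≤ ε)
    (hA0 : ∫ ω, A ω ∂P = 0) (hAQ : ∫ ω, A ω * Q ω ∂P = 0) :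
    |(∫ ω, X ω ^ 2 ∂P - (∫ ω, X ω ∂P) ^ 2) - t ^ 2 * (∫ ω, A ω ^ 2 ∂P - (∫ ω, A ω ∂P) ^ 2)|
      ≤ 2 * |t| * (C₁ * ε) + (t ^ 2 / 2 * C₂ + ε) ^ 2 := by
  set R : Ω → ℝ := fun ω => X ω - c - t * A ω - t ^ 2 / 2 * Q ω
  set H : Ω → ℝ := fun ω => t ^ 2 / 2 * Q ω + R ω
  have hA2 : MemLp A 2 P := MemLp.of_bound hA C₁ (by simpa using hA_bd)
  have hQ2 : MemLp Q 2 P := MemLp.of_bound hQ C₂ (by simpa using hQ_bd)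
  have hR2 : MemLp R 2 P := MemLp.of_bound (by fun_prop) ε (by simpa using hR_bd)
  have hH2 : MemLp H 2 P := (hQ2.const_mul _).add hR2
  have hX_eq : X = fun ω => c + (t * A ω + H ω) := by ext ω; simp only [H, R]; ring
  have hX2 : MemLp X 2 P := hX_eq ▸ (memLp_const c).add ((hA2.const_mul t).add hH2)
  have hX_var := variance_eq_sub hX2
  have hA_var := variance_eq_sub hA2
  simp only [Pi.pow_apply] at hX_var hA_var
  have hAH : ∫ ω, A ω * H ω ∂P = ∫ ω, A ω * R ω ∂P := by
    have hAQ_int : Integrable (fun ω => A ω * Q ω) P := hA2.integrable_mul hQ2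
    have hAR_int : Integrable (fun ω => A ω * R ω) P := hA2.integrable_mul hR2
    have hsplit : (fun ω => A ω * H ω) = fun ω => t ^ 2 / 2 * (A ω * Q ω) + A ω * R ω := by
      ext ω; simp only [H]; ring
    rw [hsplit, integral_add (hAQ_int.const_mul _) hAR_int, integral_const_mul, hAQ,
      mul_zero, zero_add]
  have hAR : |∫ ω, A ω * R ω ∂P| ≤ C₁ * ε := by
    refine abs_integral_le_of_ae_abs_le ?_
    filter_upwards [hA_bd, hR_bd] with ω hAω hRω
    rw [abs_mul]
    exact mul_le_mul hAω hRω (abs_nonneg _) ((abs_nonneg _).trans hAω)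
  have hH_var : Var[H; P] ≤ (t ^ 2 / 2 * C₂ + ε) ^ 2 := by
    refine (variance_le_expectation_sq hH2.aestronglyMeasurable).trans <|
      le_of_abs_le <| abs_integral_le_of_ae_abs_le ?_
    filter_upwards [hQ_bd, hR_bd] with ω hQω hRω
    have hHω : |H ω| ≤ t ^ 2 / 2 * C₂ + ε := by
      refine (abs_add_le _ _).trans ?_
      rw [abs_mul, abs_of_nonneg (by positivity : (0 : ℝ) ≤ t ^ 2 / 2)]
      gcongr
    simpa [abs_pow] using pow_le_pow_left₀ (abs_nonneg _) hHω 2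
  rw [← hX_var, ← hA_var, hX_eq, variance_const_add_mul_add c t hA2 hH2 hA0, hAH]
  calc |t ^ 2 * Var[A; P] + 2 * t * ∫ ω, A ω * R ω ∂P + Var[H; P] - t ^ 2 * Var[A; P]|
      = |2 * t * ∫ ω, A ω * R ω ∂P + Var[H; P]| := by ring_nf
    _ ≤ 2 * |t| * |∫ ω, A ω * R ω ∂P| + Var[H; P] := by
      refine (abs_add_le _ _).trans ?_
      rw [abs_of_nonneg (variance_nonneg H P), abs_mul, abs_mul, abs_two]
    _ ≤ 2 * |t| * (C₁ * ε) + (t ^ 2 / 2 * C₂ + ε) ^ 2 := by gcongr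

end Moments

/-- Sharpened perturbation approximation of the variance: if in addition the third
`t`-derivative is bounded, the second `t`-derivative at `0` is a quadratic form `q z z`
in `z`, and all third moments of the centered box-valued random parameter `Z` vanish,
then `Var[f t Z] = t² Var[L Z] + O(t⁴)`. -/
theorem variance_perturbation_fourth_order
    {Ω : Type*} [MeasurableSpace Ω] (P : Measure Ω) [IsProbabilityMeasure P]
    (M : ℕ) (δ C₁ C₂ C₃ : ℝ) (hδ : 0 < δ) (hC₁ : 0 ≤ C₁) (hC₂ : 0 ≤ C₂) (hC₃ : 0 ≤ C₃)
    (lam0 : ℝ)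
    (f f' f'' f''' : ℝ → (Fin M → ℝ) → ℝ)
    (L : (Fin M → ℝ) →ₗ[ℝ] ℝ)
    (q : (Fin M → ℝ) →ₗ[ℝ] (Fin M → ℝ) →ₗ[ℝ] ℝ)
    (hf : ∀ z : Fin M → ℝ, (∀ i, z i ∈ Set.Icc (-1 : ℝ) 1) →
      ∀ t ∈ Set.Ioo (-δ) δ,
        HasDerivAt (fun s => f s z) (f' t z) t ∧
        HasDerivAt (fun s => f' s z) (f'' t z) t ∧
        HasDerivAt (fun s => f'' s z) (f''' t z) t ∧
        |f' t z| ≤ C₁ ∧ |f'' t z| ≤ C₂ ∧ |f''' t z| ≤ C₃)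
    (hf0 : ∀ z : Fin M → ℝ, (∀ i, z i ∈ Set.Icc (-1 : ℝ) 1) → f 0 z = lam0)
    (hf'0 : ∀ z : Fin M → ℝ, (∀ i, z i ∈ Set.Icc (-1 : ℝ) 1) → f' 0 z = L z)
    (hf''0 : ∀ z : Fin M → ℝ, (∀ i, z i ∈ Set.Icc (-1 : ℝ) 1) → f'' 0 z = q z z)
    (Z : Ω → Fin M → ℝ) (hZmeas : Measurable Z)
    (hZbox : ∀ᵐ ω ∂P, ∀ i, Z ω i ∈ Set.Icc (-1 : ℝ) 1)
    (hZmean : ∫ ω, Z ω ∂P = 0)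
    (hZthird : ∀ i j k : Fin M, ∫ ω, Z ω i * Z ω j * Z ω k ∂P = 0)
    (hmeas : ∀ t : ℝ, Measurable fun ω => f t (Z ω)) :
    ∃ C'' : ℝ, 0 ≤ C'' ∧ ∀ t : ℝ, |t| < δ →
      |((∫ ω, (f t (Z ω)) ^ 2 ∂P) - (∫ ω, f t (Z ω) ∂P) ^ 2)
          - t ^ 2 * ((∫ ω, (L (Z ω)) ^ 2 ∂P) - (∫ ω, L (Z ω) ∂P) ^ 2)|
        ≤ C'' * t ^ 4 := by
  have hZ_norm : ∀ᵐ ω ∂P, ‖Z ω‖ ≤ 1 := hZbox.mono fun ω hz =>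
    (pi_norm_le_iff_of_nonneg zero_le_one).2 fun i => by simpa using abs_le.2 (hz i)
  have hA0 : ∫ ω, L (Z ω) ∂P = 0 := by
    simpa [hZmean] using (LinearMap.toContinuousLinearMap L).integral_comp_comm
      (Integrable.of_bound hZmeas.aestronglyMeasurable 1 hZ_norm)
  have hbounds_at_zero : ∀ᵐ ω ∂P, |L (Z ω)| ≤ C₁ ∧ |q (Z ω) (Z ω)| ≤ C₂ := by
    filter_upwards [hZbox] with ω hz
    obtain ⟨-, -, -, hL, hq, -⟩ := hf (Z ω) hz 0 ⟨neg_lt_zero.2 hδ, hδ⟩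
    rw [hf'0 _ hz] at hL
    rw [hf''0 _ hz] at hq
    exact ⟨hL, hq⟩
  refine ⟨2 * C₁ * C₃ + (C₂ / 2 + C₃ * δ) ^ 2, by positivity, fun t ht => ?_⟩
  have hR : ∀ᵐ ω ∂P,
      |f t (Z ω) - lam0 - t * L (Z ω) - t ^ 2 / 2 * q (Z ω) (Z ω)| ≤ C₃ * |t| ^ 3 := by
    filter_upwards [hZbox] with ω hz
    have hderiv := fun s (hs : |s| < δ) => hf (Z ω) hz s (abs_lt.1 hs)
    have := abs_sub_taylor_two_le (g := fun s => f s (Z ω)) hC₃ (fun s hs => (hderiv s hs).1)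
      (fun s hs => (hderiv s hs).2.1) (fun s hs => (hderiv s hs).2.2.1)
      (fun s hs => (hderiv s hs).2.2.2.2.2) ht
    rwa [hf0 _ hz, hf'0 _ hz, hf''0 _ hz] at this
  have hq_cont : Continuous fun z => q z z :=
    q.toContinuousBilinearMap.continuous₂.comp (continuous_id.prodMk continuous_id)
  calc _ ≤ 2 * |t| * (C₁ * (C₃ * |t| ^ 3)) + (t ^ 2 / 2 * C₂ + C₃ * |t| ^ 3) ^ 2 :=
        abs_variance_sub_sq_mul_variance_le (hmeas t).aestronglyMeasurable
          (L.continuous_of_finiteDimensional.measurable.comp hZmeas).aestronglyMeasurable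
          (hq_cont.measurable.comp hZmeas).aestronglyMeasurable
          (hbounds_at_zero.mono fun _ h => h.1) (hbounds_at_zero.mono fun _ h => h.2) hR hA0
          (integral_linearMap_mul_bilin_self_eq_zero L q
            (integrable_apply_mul_apply_mul_apply hZmeas.aestronglyMeasurable hZ_norm) hZthird)
    _ = (2 * C₁ * C₃ + (C₂ / 2 + C₃ * |t|) ^ 2) * t ^ 4 := by
        rw [← (by decide : Even 4).pow_abs t, ← sq_abs t]
        ring
    _ ≤ (2 * C₁ * C₃ + (C₂ / 2 + C₃ * δ) ^ 2) * t ^ 4 := by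
        have := abs_nonneg t
        gcongr
end
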